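/- Let X, Y be Banach spaces, U ⊆ X an open neighborhood of 0, and F : U → Y a C¹ map. Suppose DF(0) is surjective with a bounded right inverse Q, ‖Q‖ ≤ C. Suppose δ > 0 is such that the ball B_δ(0) ⊆ U and ‖DF(x) - DF(0)‖ ≤ 1/(2C) for all x ∈ B_δ(0). If ‖F(0)‖ < δ/(4C), then there exists a unique x ∈ Im(Q) ∩ B_δ(0) with F(x) = 0, and this x satisfies ‖x‖ ≤ 2C ‖F(0)‖. -/

import Mathlib

/-- Quantitative implicit function theorem (McDuff–Salamon A.3.4 / Proposition 7.6):
if `F : U → Y` is `C¹` with `DF(0)` surjective with bounded right inverse `Q`, `‖Q‖ ≤ C`,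
`‖DF(x) - DF(0)‖ ≤ 1/(2C)` on the `δ`-ball, and `‖F(0)‖ < δ/(4C)`, then there is a unique
zero `x` of `F` in `Im(Q) ∩ B_δ(0)`, and it satisfies `‖x‖ ≤ 2C ‖F 0‖`. -/
theorem stmt7 {X Y : Type*} [NormedAddCommGroup X] [NormedSpace ℝ X] [CompleteSpace X]
    [NormedAddCommGroup Y] [NormedSpace ℝ Y] [CompleteSpace Y]
    (U : Set X) (hU : IsOpen U) (h0U : (0 : X) ∈ U)
    (F : X → Y) (DF : X → X →L[ℝ] Y)
    (hF : ∀ x ∈ U, HasFDerivAt F (DF x) x) (hDFcont : ContinuousOn DF U)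
    (Q : Y →L[ℝ] X) (hQ : (DF 0).comp Q = ContinuousLinearMap.id ℝ Y)
    (C : ℝ) (hC : 0 < C) (hQC : ‖Q‖ ≤ C)
    (δ : ℝ) (hδ : 0 < δ) (hball : Metric.closedBall (0 : X) δ ⊆ U)
    (hlip : ∀ x ∈ Metric.closedBall (0 : X) δ, ‖DF x - DF 0‖ ≤ 1 / (2 * C))
    (hF0 : ‖F 0‖ < δ / (4 * C)) :
    (∃! x : X, x ∈ Set.range Q ∧ x ∈ Metric.closedBall (0 : X) δ ∧ F x = 0) ∧
    ∀ x : X, (x ∈ Set.range Q ∧ x ∈ Metric.closedBall (0 : X) δ ∧ F x = 0) →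
      ‖x‖ ≤ 2 * C * ‖F 0‖ := by
  have hC2 : C * (1 / (2 * C)) = 1 / 2 := by field_simp
  -- the right-inverse identity
  have hQid : ∀ y : Y, DF 0 (Q y) = y := fun y => by
    have := ContinuousLinearMap.ext_iff.mp hQ y
    simpa using this
  -- mean value estimate
  have hkey : ∀ a ∈ Metric.closedBall (0 : X) δ, ∀ b ∈ Metric.closedBall (0 : X) δ,
      ‖F b - F a - DF 0 (b - a)‖ ≤ 1 / (2 * C) * ‖b - a‖ := by
    intro a ha b hb
    exact (convex_closedBall (0 : X) δ).norm_image_sub_le_of_norm_hasFDerivWithin_le'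
      (fun x hx => (hF x (hball hx)).hasFDerivWithinAt) hlip ha hb
  -- uniqueness of zeros on Im Q ∩ ball
  have huniq : ∀ x₁ x₂ : X,
      (x₁ ∈ Set.range Q ∧ x₁ ∈ Metric.closedBall (0 : X) δ ∧ F x₁ = 0) →
      (x₂ ∈ Set.range Q ∧ x₂ ∈ Metric.closedBall (0 : X) δ ∧ F x₂ = 0) → x₁ = x₂ := by
    rintro x₁ x₂ ⟨⟨y₁, rfl⟩, hb₁, hz₁⟩ ⟨⟨y₂, rfl⟩, hb₂, hz₂⟩
    have h2 : Q y₁ - Q y₂ = - Q (F (Q y₁) - F (Q y₂) - DF 0 (Q y₁ - Q y₂)) := by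
      rw [hz₁, hz₂, map_sub (DF 0) (Q y₁), hQid, hQid]
      simp [map_sub]
    have h3 : ‖Q y₁ - Q y₂‖ ≤ 1 / 2 * ‖Q y₁ - Q y₂‖ := by
      conv_lhs => rw [h2]
      rw [norm_neg]
      calc ‖Q (F (Q y₁) - F (Q y₂) - DF 0 (Q y₁ - Q y₂))‖
          ≤ ‖Q‖ * ‖F (Q y₁) - F (Q y₂) - DF 0 (Q y₁ - Q y₂)‖ := Q.le_opNorm _
        _ ≤ C * (1 / (2 * C) * ‖Q y₁ - Q y₂‖) :=
            mul_le_mul hQC (hkey _ hb₂ _ hb₁) (norm_nonneg _) hC.le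
        _ = 1 / 2 * ‖Q y₁ - Q y₂‖ := by rw [← mul_assoc, hC2]
    have h4 : ‖Q y₁ - Q y₂‖ ≤ 0 := by linarith
    have h5 : Q y₁ - Q y₂ = 0 := by
      simpa using le_antisymm h4 (norm_nonneg _)
    exact sub_eq_zero.mp h5
  -- a priori bound for zeros on Im Q ∩ ball
  have hbound : ∀ x : X, (x ∈ Set.range Q ∧ x ∈ Metric.closedBall (0 : X) δ ∧ F x = 0) →
      ‖x‖ ≤ 2 * C * ‖F 0‖ := by
    rintro x ⟨⟨y, rfl⟩, hbx, hzx⟩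
    have h0b : (0 : X) ∈ Metric.closedBall (0 : X) δ := Metric.mem_closedBall_self hδ.le
    have h1 : Q y = - Q (F (Q y) - F 0 - DF 0 (Q y - 0)) - Q (F 0) := by
      simp [hzx, hQid, map_sub, map_neg, sub_zero]
    have h2 : ‖Q y‖ ≤ 1 / 2 * ‖Q y‖ + C * ‖F 0‖ := by
      calc ‖Q y‖ = ‖- Q (F (Q y) - F 0 - DF 0 (Q y - 0)) - Q (F 0)‖ := by rw [← h1]
        _ ≤ ‖Q (F (Q y) - F 0 - DF 0 (Q y - 0))‖ + ‖Q (F 0)‖ := by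
            refine (norm_sub_le _ _).trans ?_
            rw [norm_neg]
        _ ≤ C * (1 / (2 * C) * ‖Q y - 0‖) + C * ‖F 0‖ := by
            gcongr
            · exact (Q.le_opNorm _).trans
                (mul_le_mul hQC (hkey _ h0b _ hbx) (norm_nonneg _) hC.le)
            · exact (Q.le_opNorm _).trans (mul_le_mul_of_nonneg_right hQC (norm_nonneg _))
        _ = 1 / 2 * ‖Q y‖ + C * ‖F 0‖ := by rw [← mul_assoc, hC2, sub_zero]
    linarith
  -- existence via the contraction mapping principle on a ball in Y
  set r : ℝ := δ / (2 * C) with hr_def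
  have hr : 0 < r := by positivity
  set H : Y → Y := fun y => y - F (Q y) with hH_def
  set B : Set Y := Metric.closedBall (0 : Y) r with hB_def
  have hQball : ∀ y ∈ B, Q y ∈ Metric.closedBall (0 : X) δ := by
    intro y hy
    rw [Metric.mem_closedBall, dist_zero_right]
    rw [hB_def, Metric.mem_closedBall, dist_zero_right] at hy
    calc ‖Q y‖ ≤ ‖Q‖ * ‖y‖ := Q.le_opNorm _
      _ ≤ C * r := mul_le_mul hQC hy (norm_nonneg _) hC.le
      _ = δ / 2 := by rw [hr_def]; field_simp
      _ ≤ δ := by linarith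
  have hHlip : ∀ y₁ ∈ B, ∀ y₂ ∈ B, ‖H y₁ - H y₂‖ ≤ 1 / 2 * ‖y₁ - y₂‖ := by
    intro y₁ h₁ y₂ h₂
    have he : H y₁ - H y₂ = -(F (Q y₁) - F (Q y₂) - DF 0 (Q y₁ - Q y₂)) := by
      rw [hH_def]
      simp only [map_sub (DF 0), hQid]
      abel
    rw [he, norm_neg]
    calc ‖F (Q y₁) - F (Q y₂) - DF 0 (Q y₁ - Q y₂)‖
        ≤ 1 / (2 * C) * ‖Q y₁ - Q y₂‖ := hkey _ (hQball _ h₂) _ (hQball _ h₁)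
      _ ≤ 1 / (2 * C) * (C * ‖y₁ - y₂‖) := by
          gcongr
          calc ‖Q y₁ - Q y₂‖ = ‖Q (y₁ - y₂)‖ := by rw [map_sub]
            _ ≤ ‖Q‖ * ‖y₁ - y₂‖ := Q.le_opNorm _
            _ ≤ C * ‖y₁ - y₂‖ := mul_le_mul_of_nonneg_right hQC (norm_nonneg _)
      _ = 1 / 2 * ‖y₁ - y₂‖ := by field_simp
  have h0B : (0 : Y) ∈ B := Metric.mem_closedBall_self hr.le
  have hH0 : H 0 = - F 0 := by simp [hH_def]
  have hmaps : Set.MapsTo H B B := by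
    intro y hy
    rw [hB_def, Metric.mem_closedBall, dist_zero_right]
    have hyn : ‖y‖ ≤ r := by
      rw [hB_def, Metric.mem_closedBall, dist_zero_right] at hy; exact hy
    calc ‖H y‖ = ‖(H y - H 0) + H 0‖ := by rw [sub_add_cancel]
      _ ≤ ‖H y - H 0‖ + ‖H 0‖ := norm_add_le _ _
      _ ≤ 1 / 2 * ‖y - 0‖ + ‖F 0‖ := by
          gcongr
          · exact hHlip y hy 0 h0B
          · rw [hH0, norm_neg]
      _ ≤ 1 / 2 * r + δ / (4 * C) := by
          rw [sub_zero]; gcongr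
      _ = r := by rw [hr_def]; field_simp; ring
  have hcomplete : IsComplete B := (Metric.isClosed_closedBall.isComplete)
  have hcontr : ContractingWith (1/2 : NNReal) (hmaps.restrict H B B) := by
    constructor
    · rw [← NNReal.coe_lt_coe]; norm_num
    · apply LipschitzWith.of_dist_le_mul
      rintro ⟨y₁, h₁⟩ ⟨y₂, h₂⟩
      simp only [Set.MapsTo.restrict, Subtype.dist_eq, Subtype.coe_mk, dist_eq_norm]
      have := hHlip y₁ h₁ y₂ h₂
      calc ‖H y₁ - H y₂‖ ≤ 1 / 2 * ‖y₁ - y₂‖ := this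
        _ = ((1/2 : NNReal) : ℝ) * ‖y₁ - y₂‖ := by norm_num
  obtain ⟨ystar, hyB, hfix, -, -⟩ :=
    hcontr.exists_fixedPoint' hcomplete hmaps h0B (edist_ne_top _ _)
  have hFz : F (Q ystar) = 0 := by
    have : ystar - F (Q ystar) = ystar := hfix
    have := sub_eq_self.mp this
    exact this
  have hprop : Q ystar ∈ Set.range Q ∧ Q ystar ∈ Metric.closedBall (0 : X) δ ∧ F (Q ystar) = 0 :=
    ⟨⟨ystar, rfl⟩, hQball _ hyB, hFz⟩
  exact ⟨⟨Q ystar, hprop, fun x hx => huniq x (Q ystar) hx hprop⟩, hbound⟩
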